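/- Let m ≥ 2, ν = m/2 − 1, c_ν = ν + 1/2, c̄_ν = ν + 3/2. Let Π be the von Mises–Fisher distribution on the unit sphere S^{m−1} ⊂ ℝ^m with mean direction μ ∈ S^{m−1} and concentration κ ≥ 0, i.e. the probability measure with density with respect to the uniform probability measure on S^{m−1} proportional to exp(κ·⟨μ,β⟩). Then the circular variance satisfies 1 − ⟨μ, ∫_{S^{m−1}} β dΠ(β)⟩ ≤ (c_ν + √(κ² + c̄_ν²) − κ) / (c_ν + √(κ² + c̄_ν²)). -/

import Mathlib

/-! Let `M(κ) = ∫ exp (κ ⟪μ, β⟫) dU` be the moment generating function of `⟪μ, β⟫` under the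
uniform measure; the mean resultant length of the vMF distribution is `A = M' / M`.
By rotation invariance `∫ exp ⟪x, β⟫ dU` depends only on `‖x‖`; differentiating twice in a
direction orthogonal to `μ` and summing over an orthonormal basis through `μ` gives the Bessel
equation `κ M'' + (m - 1) M' = κ M`. For Amos' function `φ`, `D = M' - φ M` then satisfies
`κ D' + (m - 1 + κ φ) D = M (κ - (m - 1) φ - κ φ' - κ φ²) ≥ 0`, since `φ` is a subsolution of the
Riccati equation of `A`. With the integrating factor `κ ^ (m - 1) exp (∫ φ)` this forces `D ≥ 0`,
that is `A ≥ φ`. -/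

open MeasureTheory
open scoped RealInnerProductSpace

/-- The uniform probability measure on the unit sphere of `ℝ^m`. -/
noncomputable def uniformSphere (m : ℕ) :
    Measure (Metric.sphere (0 : EuclideanSpace ℝ (Fin m)) 1) :=
  ((volume : Measure (EuclideanSpace ℝ (Fin m))).toSphere Set.univ)⁻¹ •
    (volume : Measure (EuclideanSpace ℝ (Fin m))).toSphere

/-- The von Mises–Fisher distribution on the unit sphere of `ℝ^m` with mean direction `μ`
and concentration `κ`: its density with respect to the uniform probability measure is
proportional to `exp(κ·⟨μ,β⟩)`. -/
noncomputable def vMF (m : ℕ) (κ : ℝ)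
    (μ : Metric.sphere (0 : EuclideanSpace ℝ (Fin m)) 1) :
    Measure (Metric.sphere (0 : EuclideanSpace ℝ (Fin m)) 1) :=
  (uniformSphere m).withDensity fun β =>
    ENNReal.ofReal
      (Real.exp (κ * ⟪(μ : EuclideanSpace ℝ (Fin m)), (β : EuclideanSpace ℝ (Fin m))⟫) /
        ∫ β', Real.exp
          (κ * ⟪(μ : EuclideanSpace ℝ (Fin m)), (β' : EuclideanSpace ℝ (Fin m))⟫)
          ∂(uniformSphere m))

open Metric Set ProbabilityTheory Real Module
open scoped Pointwise

theorem nonneg_of_mul_deriv_add_mul_nonneg {D D' φ : ℝ → ℝ} {p : ℕ} (hp : 0 < p)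
    (hD : ∀ x, HasDerivAt D (D' x) x) (hφ : Continuous φ)
    (h : ∀ x, 0 < x → 0 ≤ x * D' x + (p + x * φ x) * D x) {x : ℝ} (hx : 0 ≤ x) : 0 ≤ D x := by
  set Φ : ℝ → ℝ := fun x ↦ ∫ t in (0 : ℝ)..x, φ t
  set w : ℝ → ℝ := fun x ↦ x ^ p * exp (Φ x) * D x
  have hw (x : ℝ) :
      HasDerivAt w (x ^ (p - 1) * exp (Φ x) * (x * D' x + (p + x * φ x) * D x)) x := by
    refine (((hasDerivAt_pow p x).mul (hφ.integral_hasStrictDerivAt 0 x).hasDerivAt.exp).mul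
      (hD x)).congr_deriv ?_
    obtain ⟨q, rfl⟩ : ∃ q, p = q + 1 := ⟨p - 1, by omega⟩
    simp only [Pi.mul_apply, Nat.add_sub_cancel, pow_succ]
    push_cast
    ring
  have hmono : MonotoneOn w (Ici 0) := by
    refine monotoneOn_of_deriv_nonneg (convex_Ici 0)
      (fun x _ ↦ (hw x).continuousAt.continuousWithinAt)
      (fun x _ ↦ (hw x).differentiableAt.differentiableWithinAt) fun x hx ↦ ?_
    replace hx : 0 < x := by rwa [interior_Ici] at hx
    rw [(hw x).deriv]
    exact mul_nonneg (by positivity) (h x hx)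
  have hpos (x : ℝ) (hx : 0 < x) : 0 ≤ D x := by
    have hw0 : w 0 ≤ w x := hmono (mem_Ici.2 le_rfl) hx.le hx.le
    simp only [w, zero_pow hp.ne', zero_mul] at hw0
    exact nonneg_of_mul_nonneg_right hw0 (by positivity)
  rcases hx.eq_or_lt with rfl | hx
  · exact ge_of_tendsto ((hD 0).continuousAt.continuousWithinAt (s := Ioi 0))
      (eventually_nhdsWithin_of_forall hpos)
  · exact hpos x hx

lemma le_sqrt_sq_add_sq (a x : ℝ) : a ≤ √(x ^ 2 + a ^ 2) :=
  le_sqrt_of_sq_le (by nlinarith [sq_nonneg x])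

/-- Amos' lower bound `x / (ν + 1/2 + √(x² + (ν + 3/2)²))` for the Bessel ratio
`I_{ν+1}(x) / I_ν(x)`, written with `c = ν + 1/2`. -/
noncomputable def amosBound (c x : ℝ) : ℝ := x / (c + √(x ^ 2 + (c + 1) ^ 2))

section AmosBound

variable {c : ℝ} (hc : 0 ≤ c)
include hc

lemma hasDerivAt_amosBound (x : ℝ) :
    HasDerivAt (amosBound c)
      ((c * √(x ^ 2 + (c + 1) ^ 2) + (c + 1) ^ 2) /
        (√(x ^ 2 + (c + 1) ^ 2) * (c + √(x ^ 2 + (c + 1) ^ 2)) ^ 2)) x := by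
  have hs := le_sqrt_sq_add_sq (c + 1) x
  have hsq : √(x ^ 2 + (c + 1) ^ 2) ^ 2 = x ^ 2 + (c + 1) ^ 2 := sq_sqrt (by positivity)
  have hden : c + √(x ^ 2 + (c + 1) ^ 2) ≠ 0 := by linarith
  have hpos : x ^ 2 + (c + 1) ^ 2 ≠ 0 := by nlinarith [sq_nonneg x]
  refine ((hasDerivAt_id x).div
    (((hasDerivAt_pow 2 x).add_const _).sqrt hpos |>.const_add c) hden).congr_deriv ?_
  simp only [id]
  field_simp
  linear_combination 2 * hsq

lemma continuous_amosBound : Continuous (amosBound c) :=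
  continuous_iff_continuousAt.2 fun x ↦ (hasDerivAt_amosBound hc x).continuousAt

lemma mul_deriv_amosBound_le {x φ' : ℝ} (hx : 0 ≤ x) (hφ' : HasDerivAt (amosBound c) φ' x) :
    x * φ' ≤ x - 2 * c * amosBound c x - x * amosBound c x ^ 2 := by
  rw [hφ'.unique (hasDerivAt_amosBound hc x), amosBound]
  set s := √(x ^ 2 + (c + 1) ^ 2)
  have hs : c + 1 ≤ s := le_sqrt_sq_add_sq (c + 1) x
  have hsq : s ^ 2 = x ^ 2 + (c + 1) ^ 2 := sq_sqrt (by positivity)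
  have hs0 : 0 < s := by linarith
  have hcs : 0 < c + s := by linarith
  have key : x - 2 * c * (x / (c + s)) - x * (x / (c + s)) ^ 2 -
      x * ((c * s + (c + 1) ^ 2) / (s * (c + s) ^ 2)) =
      x * ((c + 1) * (s - (c + 1))) / (s * (c + s) ^ 2) := by
    field_simp
    linear_combination (x * s) * hsq
  have : 0 ≤ x * ((c + 1) * (s - (c + 1))) / (s * (c + s) ^ 2) := by
    apply div_nonneg (mul_nonneg hx (mul_nonneg (by linarith) (by linarith)))
    positivity
  linarith

end AmosBound

lemma hasDerivAt_sqrt_sq_add_sq {κ : ℝ} (hκ : κ ≠ 0) (u : ℝ) :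
    HasDerivAt (fun u ↦ √(κ ^ 2 + u ^ 2)) (u / √(κ ^ 2 + u ^ 2)) u := by
  have hpos : 0 < κ ^ 2 + u ^ 2 := by positivity
  convert ((hasDerivAt_pow 2 u).const_add (κ ^ 2)).sqrt hpos.ne' using 1
  field_simp
  ring

lemma iteratedDeriv_two_comp_sqrt_sq_add_sq {f f' f'' : ℝ → ℝ}
    (hf : ∀ x, HasDerivAt f (f' x) x) (hf' : ∀ x, HasDerivAt f' (f'' x) x) {κ : ℝ}
    (hκ : 0 < κ) :
    iteratedDeriv 2 (fun u ↦ f √(κ ^ 2 + u ^ 2)) 0 = f' κ / κ := by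
  set r : ℝ → ℝ := fun u ↦ √(κ ^ 2 + u ^ 2)
  have hr : ∀ u, HasDerivAt r (u / r u) u := hasDerivAt_sqrt_sq_add_sq hκ.ne'
  have hr0 : r 0 = κ := by simp [r, sqrt_sq hκ.le]
  have hderiv : deriv (fun u ↦ f (r u)) = fun u ↦ f' (r u) * (u / r u) :=
    funext fun u ↦ ((hf (r u)).comp u (hr u)).deriv
  have h : HasDerivAt (fun u ↦ f' (r u) * (u / r u)) (f' κ / κ) 0 := by
    refine (((hf' (r 0)).comp 0 (hr 0)).mul
      ((hasDerivAt_id 0).div (hr 0) (hr0 ▸ hκ.ne'))).congr_deriv ?_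
    simp only [Pi.div_apply, Function.comp_apply, id, hr0]
    field_simp
    ring
  rw [iteratedDeriv_succ, iteratedDeriv_one, hderiv, h.deriv]

section CompactSpace

variable {Ω : Type*} [TopologicalSpace Ω] [CompactSpace Ω] [MeasurableSpace Ω]
  [OpensMeasurableSpace Ω] {ν : Measure Ω} [IsFiniteMeasure ν]

lemma Continuous.integrable_of_compactSpace {F : Type*} [NormedAddCommGroup F] {f : Ω → F}
    (hf : Continuous f) : Integrable f ν :=
  hf.integrable_of_hasCompactSupport (.of_compactSpace f)

lemma integrableExpSet_eq_univ_of_continuous {X : Ω → ℝ} (hX : Continuous X) :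
    integrableExpSet X ν = univ :=
  eq_univ_of_forall fun _ ↦ (continuous_const.mul hX).rexp.integrable_of_compactSpace

end CompactSpace

section Sphere

variable {E : Type*} [NormedAddCommGroup E] [InnerProductSpace ℝ E]

lemma continuous_inner_sphere (x : E) : Continuous fun β : sphere (0 : E) 1 ↦ ⟪x, (β : E)⟫ :=
  continuous_const.inner continuous_subtype_val

lemma norm_smul_add_smul_of_inner_eq_zero {μ v : E} (hμ : ‖μ‖ = 1) (hv : ‖v‖ = 1)
    (hμv : ⟪μ, v⟫ = 0) (a b : ℝ) : ‖a • μ + b • v‖ = √(a ^ 2 + b ^ 2) := by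
  rw [← sqrt_sq (norm_nonneg _), norm_add_sq_real, real_inner_smul_left, real_inner_smul_right,
    hμv, norm_smul, norm_smul, hμ, hv, norm_eq_abs, norm_eq_abs]
  simp [sq_abs]

lemma exists_orthonormalBasis_apply_eq [FiniteDimensional ℝ E] (μ : sphere (0 : E) 1) :
    ∃ (b : OrthonormalBasis (Fin (finrank ℝ E)) ℝ E) (i : Fin (finrank ℝ E)), b i = μ := by
  have : Nontrivial E := nontrivial_of_ne (μ : E) 0 (ne_zero_of_mem_unit_sphere μ)
  let i : Fin (finrank ℝ E) := ⟨0, finrank_pos⟩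
  have hμ : Orthonormal ℝ (({i} : Set _).domRestrict fun _ ↦ (μ : E)) :=
    ⟨fun _ ↦ norm_eq_of_mem_sphere μ, fun j k hjk ↦ absurd (Subtype.ext (j.2.trans k.2.symm)) hjk⟩
  obtain ⟨b, hb⟩ := hμ.exists_orthonormalBasis_extension_of_card_eq (by simp)
  exact ⟨b, i, hb i rfl⟩

def sphereMap (e : E ≃ₗᵢ[ℝ] E) (β : sphere (0 : E) 1) : sphere (0 : E) 1 :=
  ⟨e β, by simp [norm_eq_of_mem_sphere β]⟩

lemma continuous_sphereMap (e : E ≃ₗᵢ[ℝ] E) : Continuous (sphereMap e) :=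
  (e.continuous.comp continuous_subtype_val).subtype_mk _

lemma image_val_preimage_sphereMap (e : E ≃ₗᵢ[ℝ] E) (s : Set (sphere (0 : E) 1)) :
    Subtype.val '' (sphereMap e ⁻¹' s) = e ⁻¹' (Subtype.val '' s) := by
  ext x
  constructor
  · rintro ⟨β, hβ, rfl⟩
    exact ⟨sphereMap e β, hβ, rfl⟩
  · rintro ⟨β, hβ, hx⟩
    have hx1 : x ∈ sphere (0 : E) 1 := by
      rw [mem_sphere_zero_iff_norm, ← e.norm_map, ← hx, norm_eq_of_mem_sphere β]
    refine ⟨⟨x, hx1⟩, ?_, rfl⟩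
    rwa [mem_preimage, show sphereMap e ⟨x, hx1⟩ = β from Subtype.ext hx.symm]

lemma set_smul_preimage (e : E ≃ₗᵢ[ℝ] E) (S : Set ℝ) (A : Set E) :
    S • (e ⁻¹' A) = e ⁻¹' (S • A) := by
  ext x
  simp only [Set.mem_smul, mem_preimage]
  constructor
  · rintro ⟨r, hr, a, ha, rfl⟩
    exact ⟨r, hr, e a, ha, (map_smul e r a).symm⟩
  · rintro ⟨r, hr, a, ha, hx⟩
    exact ⟨r, hr, e.symm a, by simpa using ha, e.injective (by simp [hx])⟩

variable [MeasurableSpace E] [BorelSpace E]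

lemma map_sphereMap_toSphere {μ : Measure E} (e : E ≃ₗᵢ[ℝ] E) (he : MeasurePreserving e μ μ) :
    μ.toSphere.map (sphereMap e) = μ.toSphere := by
  ext s hs
  have hmeas := (continuous_sphereMap e).measurable
  rw [Measure.map_apply hmeas hs, Measure.toSphere_apply' _ (hmeas hs),
    Measure.toSphere_apply' _ hs, image_val_preimage_sphereMap, set_smul_preimage,
    he.measure_preimage_emb e.toHomeomorph.measurableEmbedding]

variable {ν : Measure (sphere (0 : E) 1)}

lemma integral_exp_inner_eq_mgf_norm (hν : ∀ e : E ≃ₗᵢ[ℝ] E, ν.map (sphereMap e) = ν)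
    (μ : sphere (0 : E) 1) (x : E) :
    ∫ β, exp ⟪x, (β : E)⟫ ∂ν = mgf (fun β : sphere (0 : E) 1 ↦ ⟪(μ : E), β⟫) ν ‖x‖ := by
  set w : E := ‖x‖ • (μ : E)
  set e : E ≃ₗᵢ[ℝ] E := (ℝ ∙ (w - x))ᗮ.reflection
  have hex : e w = x :=
    Submodule.reflection_sub (by simp [w, norm_smul, norm_eq_of_mem_sphere μ])
  conv_lhs => rw [← hν e, integral_map (continuous_sphereMap e).aemeasurable
    (continuous_inner_sphere x).rexp.aestronglyMeasurable]
  rw [mgf]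
  congr 1
  funext β
  change exp ⟪x, e β⟫ = exp (‖x‖ * ⟪(μ : E), β⟫)
  rw [← real_inner_smul_left, ← e.inner_map_map w, hex]

variable [FiniteDimensional ℝ E] [IsFiniteMeasure ν]

lemma inner_integral_tilted (μ : sphere (0 : E) 1) (κ : ℝ) :
    ⟪(μ : E), ∫ β, (β : E) ∂(ν.tilted fun β ↦ κ * ⟪(μ : E), β⟫)⟫ =
      deriv (mgf (fun β : sphere (0 : E) 1 ↦ ⟪(μ : E), β⟫) ν) κ /
        mgf (fun β : sphere (0 : E) 1 ↦ ⟪(μ : E), β⟫) ν κ := by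
  have hκ : κ ∈ interior (integrableExpSet (fun β : sphere (0 : E) 1 ↦ ⟪(μ : E), β⟫) ν) := by
    simp [integrableExpSet_eq_univ_of_continuous (continuous_inner_sphere (μ : E))]
  rw [← integral_inner continuous_subtype_val.integrable_of_compactSpace,
    integral_tilted_mul_self hκ, deriv_cgf hκ, deriv_mgf hκ]

section RotationInvariant

variable (hν : ∀ e : E ≃ₗᵢ[ℝ] E, ν.map (sphereMap e) = ν)
include hν

/-- By rotation invariance `u ↦ ∫ exp ⟪κ μ + u v, β⟫ dν` is `M (√(κ² + u²))`; the left-hand side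
is its second derivative at `u = 0`. -/
lemma integral_inner_sq_mul_exp_of_inner_eq_zero (μ : sphere (0 : E) 1) {v : E}
    (hv : ‖v‖ = 1) (hμv : ⟪(μ : E), v⟫ = 0) {κ : ℝ} (hκ : 0 < κ) :
    ∫ β, ⟪v, (β : E)⟫ ^ 2 * exp (κ * ⟪(μ : E), β⟫) ∂ν =
      deriv (mgf (fun β : sphere (0 : E) 1 ↦ ⟪(μ : E), β⟫) ν) κ / κ := by
  set X : sphere (0 : E) 1 → ℝ := fun β ↦ ⟪(μ : E), β⟫
  set Y : sphere (0 : E) 1 → ℝ := fun β ↦ ⟪v, (β : E)⟫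
  have hX : Continuous X := continuous_inner_sphere (μ : E)
  have hY : Continuous Y := continuous_inner_sphere v
  set ν' := ν.withDensity fun β ↦ ENNReal.ofReal (exp (κ * X β))
  have hdens : Measurable fun β ↦ ENNReal.ofReal (exp (κ * X β)) :=
    (continuous_const.mul hX).rexp.measurable.ennreal_ofReal
  have integral_ν' (g : sphere (0 : E) 1 → ℝ) :
      ∫ β, g β ∂ν' = ∫ β, exp (κ * X β) * g β ∂ν := by
    rw [integral_withDensity_eq_integral_toReal_smul hdens (ae_of_all _ fun _ ↦ by simp)]
    simp [ENNReal.toReal_ofReal (exp_pos _).le]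
  have : IsFiniteMeasure ν' := isFiniteMeasure_withDensity_ofReal
    (continuous_const.mul hX).rexp.integrable_of_compactSpace.2
  have hmgf : mgf Y ν' = fun u ↦ mgf X ν √(κ ^ 2 + u ^ 2) := by
    ext u
    rw [mgf, integral_ν', ← norm_smul_add_smul_of_inner_eq_zero (norm_eq_of_mem_sphere μ) hv hμv,
      ← integral_exp_inner_eq_mgf_norm hν μ]
    congr 1 with β
    rw [← exp_add, inner_add_left, real_inner_smul_left, real_inner_smul_left]
  have hint (t : ℝ) : t ∈ interior (integrableExpSet X ν) := by
    simp [integrableExpSet_eq_univ_of_continuous hX]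
  have hM (t : ℝ) : HasDerivAt (mgf X ν) (deriv (mgf X ν) t) t :=
    (hasDerivAt_mgf (hint t)).differentiableAt.hasDerivAt
  have hM' (t : ℝ) : HasDerivAt (deriv (mgf X ν)) (ν[fun β ↦ X β ^ 2 * exp (t * X β)]) t := by
    simpa using hasDerivAt_iteratedDeriv_mgf (hint t) 1
  calc ∫ β, Y β ^ 2 * exp (κ * X β) ∂ν
      = iteratedDeriv 2 (mgf Y ν') 0 := by
        rw [iteratedDeriv_mgf_zero (by simp [integrableExpSet_eq_univ_of_continuous hY]),
          integral_ν']
        simp_rw [Pi.pow_apply, mul_comm]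
    _ = deriv (mgf X ν) κ / κ := by
        rw [hmgf, iteratedDeriv_two_comp_sqrt_sq_add_sq hM hM' hκ]

theorem mgf_inner_eq_iteratedDeriv_two_add (μ : sphere (0 : E) 1) {κ : ℝ} (hκ : 0 < κ) :
    mgf (fun β : sphere (0 : E) 1 ↦ ⟪(μ : E), β⟫) ν κ =
      iteratedDeriv 2 (mgf (fun β : sphere (0 : E) 1 ↦ ⟪(μ : E), β⟫) ν) κ +
        ((finrank ℝ E : ℝ) - 1) *
          (deriv (mgf (fun β : sphere (0 : E) 1 ↦ ⟪(μ : E), β⟫) ν) κ / κ) := by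
  set M := mgf (fun β : sphere (0 : E) 1 ↦ ⟪(μ : E), β⟫) ν
  obtain ⟨b, i, hbi⟩ := exists_orthonormalBasis_apply_eq μ
  have hsum : M κ = ∑ j, ∫ β, ⟪b j, (β : E)⟫ ^ 2 * exp (κ * ⟪(μ : E), β⟫) ∂ν := by
    have hint (j : Fin (finrank ℝ E)) : Integrable
        (fun β : sphere (0 : E) 1 ↦ ⟪b j, (β : E)⟫ ^ 2 * exp (κ * ⟪(μ : E), β⟫)) ν :=
      (((continuous_inner_sphere (b j)).pow 2).mul
        (continuous_const.mul (continuous_inner_sphere (μ : E))).rexp).integrable_of_compactSpace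
    rw [← integral_finsetSum _ fun j _ ↦ hint j]
    refine integral_congr_ae (ae_of_all _ fun β ↦ ?_)
    dsimp only
    rw [← Finset.sum_mul, b.sum_sq_inner_right, norm_eq_of_mem_sphere, one_pow, one_mul]
  have hperp (j) (hj : j ∈ Finset.univ.erase i) :
      ∫ β, ⟪b j, (β : E)⟫ ^ 2 * exp (κ * ⟪(μ : E), β⟫) ∂ν = deriv M κ / κ :=
    integral_inner_sq_mul_exp_of_inner_eq_zero hν μ (b.orthonormal.1 j)
      (hbi ▸ b.orthonormal.2 (Finset.ne_of_mem_erase hj).symm) hκ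
  have : Nontrivial E := nontrivial_of_ne (μ : E) 0 (ne_zero_of_mem_unit_sphere μ)
  rw [hsum, ← Finset.add_sum_erase _ _ (Finset.mem_univ i), Finset.sum_congr rfl hperp,
    Finset.sum_const, Finset.card_erase_of_mem (Finset.mem_univ i), Finset.card_univ,
    Fintype.card_fin, nsmul_eq_mul, Nat.cast_pred finrank_pos, hbi, iteratedDeriv_mgf
      (by simp [integrableExpSet_eq_univ_of_continuous (continuous_inner_sphere (μ : E))])]

theorem amosBound_mul_mgf_le_deriv_mgf [NeZero ν] (hE : 2 ≤ finrank ℝ E) (μ : sphere (0 : E) 1)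
    {κ : ℝ} (hκ : 0 ≤ κ) :
    amosBound (((finrank ℝ E : ℝ) - 1) / 2) κ *
        mgf (fun β : sphere (0 : E) 1 ↦ ⟪(μ : E), β⟫) ν κ ≤
      deriv (mgf (fun β : sphere (0 : E) 1 ↦ ⟪(μ : E), β⟫) ν) κ := by
  set X : sphere (0 : E) 1 → ℝ := fun β ↦ ⟪(μ : E), β⟫
  set M := mgf X ν
  set c : ℝ := ((finrank ℝ E : ℝ) - 1) / 2
  have hX : Continuous X := continuous_inner_sphere (μ : E)
  have hint (t : ℝ) : t ∈ interior (integrableExpSet X ν) := by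
    simp [integrableExpSet_eq_univ_of_continuous hX]
  have hM (t : ℝ) : HasDerivAt M (deriv M t) t :=
    (hasDerivAt_mgf (hint t)).differentiableAt.hasDerivAt
  have hM' (t : ℝ) : HasDerivAt (deriv M) (iteratedDeriv 2 M t) t := by
    simpa [M, iteratedDeriv_mgf (hint t)] using hasDerivAt_iteratedDeriv_mgf (hint t) 1
  have hc : 0 ≤ c := by
    have : (2 : ℝ) ≤ finrank ℝ E := by exact_mod_cast hE
    simp only [c]; linarith
  have hφ (t : ℝ) : HasDerivAt (amosBound c) (deriv (amosBound c) t) t :=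
    (hasDerivAt_amosBound hc t).differentiableAt.hasDerivAt
  have hp : ((finrank ℝ E - 1 : ℕ) : ℝ) = 2 * c := by
    rw [Nat.cast_sub (by omega)]; simp only [c]; push_cast; ring
  suffices h : 0 ≤ deriv M κ - amosBound c κ * M κ by linarith
  refine nonneg_of_mul_deriv_add_mul_nonneg (by omega : 0 < finrank ℝ E - 1)
    (fun t ↦ (hM' t).sub ((hφ t).mul (hM t))) (continuous_amosBound hc) (fun t ht ↦ ?_) hκ
  have hbessel : t * iteratedDeriv 2 M t = t * M t - 2 * c * deriv M t := by
    have : M t = iteratedDeriv 2 M t + (finrank ℝ E - 1) * (deriv M t / t) :=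
      mgf_inner_eq_iteratedDeriv_two_add hν μ ht
    rw [this]; field_simp; simp only [c]; ring
  have hMpos : 0 < M t :=
    mgf_pos' (NeZero.ne ν) (continuous_const.mul hX).rexp.integrable_of_compactSpace
  refine (mul_nonneg hMpos.le (sub_nonneg.2 (mul_deriv_amosBound_le hc ht.le (hφ t)))).trans_eq ?_
  simp only [Pi.sub_apply, Pi.mul_apply, hp]
  linear_combination (-1) * hbessel

end RotationInvariant

end Sphere

section UniformSphere

variable {m : ℕ}

lemma isProbabilityMeasure_uniformSphere (hm : 1 ≤ m) :
    IsProbabilityMeasure (uniformSphere m) := by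
  have : Nonempty (Fin m) := ⟨⟨0, hm⟩⟩
  constructor
  rw [uniformSphere, Measure.smul_apply, smul_eq_mul, ENNReal.inv_mul_cancel
    (Measure.measure_univ_ne_zero.2 (Measure.toSphere_ne_zero _)) (measure_ne_top _ _)]

lemma map_sphereMap_uniformSphere (e : EuclideanSpace ℝ (Fin m) ≃ₗᵢ[ℝ] EuclideanSpace ℝ (Fin m)) :
    (uniformSphere m).map (sphereMap e) = uniformSphere m := by
  rw [uniformSphere, Measure.map_smul, map_sphereMap_toSphere e e.measurePreserving]

lemma vMF_eq_tilted (κ : ℝ) (μ : sphere (0 : EuclideanSpace ℝ (Fin m)) 1) :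
    vMF m κ μ = (uniformSphere m).tilted fun β ↦ κ * ⟪(μ : EuclideanSpace ℝ (Fin m)), β⟫ :=
  rfl

end UniformSphere

/-- Upper bound on the circular variance of a von Mises–Fisher distribution with mean
direction `μ` and concentration `κ ≥ 0` on the unit sphere of `ℝ^m`, `m ≥ 2`:
`1 − ⟨μ, E_Π[β]⟩ ≤ (c_ν + √(κ² + c̄_ν²) − κ)/(c_ν + √(κ² + c̄_ν²))` where
`ν = m/2 − 1`, `c_ν = ν + 1/2` and `c̄_ν = ν + 3/2`. -/
theorem stmt_4 (m : ℕ) (hm : 2 ≤ m) (ν cν cbν : ℝ)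
    (hν : ν = (m : ℝ) / 2 - 1) (hcν : cν = ν + 1 / 2) (hcbν : cbν = ν + 3 / 2)
    (κ : ℝ) (hκ : 0 ≤ κ) (μ : Metric.sphere (0 : EuclideanSpace ℝ (Fin m)) 1) :
    1 - ⟪(μ : EuclideanSpace ℝ (Fin m)),
        ∫ β, (β : EuclideanSpace ℝ (Fin m)) ∂(vMF m κ μ)⟫ ≤
      (cν + Real.sqrt (κ ^ 2 + cbν ^ 2) - κ) / (cν + Real.sqrt (κ ^ 2 + cbν ^ 2)) := by
  have := isProbabilityMeasure_uniformSphere (m := m) (by omega)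
  have hdim : finrank ℝ (EuclideanSpace ℝ (Fin m)) = m := by simp
  have hc : ((finrank ℝ (EuclideanSpace ℝ (Fin m)) : ℝ) - 1) / 2 = cν := by
    rw [hdim, hcν, hν]; ring
  have hcb : cbν = cν + 1 := by rw [hcbν, hcν]; ring
  have hbound := amosBound_mul_mgf_le_deriv_mgf map_sphereMap_uniformSphere (by simpa using hm) μ hκ
  rw [hc, ← le_div_iff₀ (mgf_pos (continuous_const.mul
    (continuous_inner_sphere _)).rexp.integrable_of_compactSpace), ← inner_integral_tilted,
    ← vMF_eq_tilted] at hbound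
  have hden : 0 < cν + √(κ ^ 2 + cbν ^ 2) := by
    have : (2 : ℝ) ≤ m := by exact_mod_cast hm
    linarith [le_sqrt_sq_add_sq cbν κ]
  rw [sub_div, div_self hden.ne', hcb]
  exact sub_le_sub_left hbound 1
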